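/- arXiv:1702.03328 — 5 statements merged into one kernel-verified Lean document; each statement's English description precedes it below -/
import Mathlib

section
/- For any two lines ℓ and m (2-dimensional real subspaces of ℍ) there exist unit quaternions a and b such that m = {a * q * b : q ∈ ℓ}. (Thus the group PSO(4,ℝ) of maps q ↦ a q b acts transitively on the set of lines of PG(3,ℝ).) -/
/-! Every line is `span {u, w * u}` with `u` a unit and `w` a pure unit quaternion (from an
orthonormal basis `u, v` take `w = v * star u`). Pure unit quaternions square to `-1`, so any two
of them, `w` and `z`, are conjugate up to sign: `c = 1 - z * w` satisfies `c * w = z * c` unless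
`w = -z`. After normalising `c`, the map `q ↦ c * q * (star u * star c * p)` sends `u` to `p` and
`w * u` to `±z * p`. -/

open Quaternion

theorem Submodule.span_pair_neg_right {R M : Type*} [Ring R] [AddCommGroup M] [Module R M]
    (x y : M) : span R {x, -y} = span R {x, y} := by
  rw [span_insert, span_insert, ← Set.neg_singleton, span_neg]

theorem Submodule.exists_orthonormal_pair_span_eq {𝕜 E : Type*} [RCLike 𝕜]
    [NormedAddCommGroup E] [InnerProductSpace 𝕜 E] (ℓ : Submodule 𝕜 E)
    (hℓ : Module.finrank 𝕜 ℓ = 2) :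
    ∃ u v : E, ‖u‖ = 1 ∧ ‖v‖ = 1 ∧ inner 𝕜 u v = 0 ∧ ℓ = span 𝕜 {u, v} := by
  have : FiniteDimensional 𝕜 ℓ := .of_finrank_pos (by omega)
  let e : OrthonormalBasis (Fin 2) 𝕜 ℓ := (stdOrthonormalBasis 𝕜 ℓ).reindex (finCongr hℓ)
  refine ⟨e 0, e 1, e.orthonormal.1 0, e.orthonormal.1 1, e.orthonormal.2 (by decide), ?_⟩
  calc ℓ = map ℓ.subtype (span 𝕜 (Set.range e)) := by
        rw [← e.coe_toBasis, e.toBasis.span_eq, map_subtype_top]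
    _ = span 𝕜 {(e 0 : E), (e 1 : E)} := by
        rw [map_span, ← Set.range_comp, Fin.range_fin_succ, Set.range_unique]
        rfl

theorem Submodule.image_mul_mul_span_pair {R A : Type*} [CommSemiring R] [Semiring A]
    [Algebra R A] (a b x y : A) :
    (fun q => a * q * b) '' (span R {x, y} : Set A) = span R {a * x * b, a * y * b} := by
  change ⇑(LinearMap.mulLeftRight R (a, b)) '' _ = _
  rw [← map_coe, map_span, Set.image_pair]
  rfl

namespace Quaternion

theorem self_mul_star_eq_one {a : ℍ} (ha : ‖a‖ = 1) : a * star a = 1 := by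
  rw [self_mul_star, normSq_eq_norm_mul_self, ha, mul_one, coe_one]

theorem star_mul_self_eq_one {a : ℍ} (ha : ‖a‖ = 1) : star a * a = 1 := by
  rw [star_mul_self, normSq_eq_norm_mul_self, ha, mul_one, coe_one]

theorem mul_self_eq_neg_one {w : ℍ} (hw : ‖w‖ = 1) (hre : w.re = 0) : w * w = -1 := by
  rw [← sq, sq_eq_neg_normSq.mpr hre, normSq_eq_norm_mul_self, hw, mul_one, coe_one]

theorem exists_span_eq_pair_mul (ℓ : Submodule ℝ ℍ) (hℓ : Module.finrank ℝ ℓ = 2) :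
    ∃ u w : ℍ, ‖u‖ = 1 ∧ ‖w‖ = 1 ∧ w.re = 0 ∧ ℓ = Submodule.span ℝ {u, w * u} := by
  obtain ⟨u, v, hu, hv, huv, rfl⟩ := ℓ.exists_orthonormal_pair_span_eq hℓ
  refine ⟨u, v * star u, hu, by rw [norm_mul, norm_star, hu, hv, mul_one], ?_, ?_⟩
  · rw [← inner_def, real_inner_comm, huv]
  · rw [mul_assoc, star_mul_self_eq_one hu, mul_one]

theorem exists_ne_zero_mul_eq_or_neg {w z : ℍ} (hw : ‖w‖ = 1) (hwre : w.re = 0)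
    (hz : ‖z‖ = 1) (hzre : z.re = 0) : ∃ c ≠ 0, c * w = z * c ∨ c * w = -(z * c) := by
  by_cases hwz : w = -z
  · exact ⟨1, one_ne_zero, Or.inr (by simp [hwz])⟩
  have hww := mul_self_eq_neg_one hw hwre
  have hzz := mul_self_eq_neg_one hz hzre
  refine ⟨1 - z * w, fun h0 => hwz ?_, Or.inl ?_⟩
  · calc w = -(z * z) * w := by rw [hzz, neg_neg, one_mul]
      _ = -z * (z * w) := by noncomm_ring
      _ = -z := by rw [← sub_eq_zero.mp h0, mul_one]
  · calc (1 - z * w) * w = w - z * (w * w) := by noncomm_ring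
      _ = z - (z * z) * w := by rw [hww, hzz]; noncomm_ring
      _ = z * (1 - z * w) := by noncomm_ring

theorem exists_norm_eq_one_mul_eq_or_neg {w z : ℍ} (hw : ‖w‖ = 1) (hwre : w.re = 0)
    (hz : ‖z‖ = 1) (hzre : z.re = 0) :
    ∃ c : ℍ, ‖c‖ = 1 ∧ (c * w = z * c ∨ c * w = -(z * c)) := by
  obtain ⟨c, hc, hcw⟩ := exists_ne_zero_mul_eq_or_neg hw hwre hz hzre
  refine ⟨(‖c‖⁻¹ : ℝ) • c, norm_smul_inv_norm hc, ?_⟩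
  simp only [smul_mul_assoc, mul_smul_comm, ← smul_neg]
  rcases hcw with h | h <;> simp [h]

end Quaternion

/-- For any two lines `ℓ`, `m` (2-dimensional real subspaces of ℍ) there are unit
quaternions `a`, `b` with `m = {a * q * b : q ∈ ℓ}`: the group PSO(4,ℝ) of maps
`q ↦ a * q * b` acts transitively on the lines of PG(3,ℝ). -/
theorem pso4_transitive_on_lines (ℓ m : Submodule ℝ ℍ[ℝ])
    (hℓ : Module.finrank ℝ ℓ = 2) (hm : Module.finrank ℝ m = 2) :
    ∃ a b : ℍ[ℝ], ‖a‖ = 1 ∧ ‖b‖ = 1 ∧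
      (m : Set ℍ[ℝ]) = (fun q => a * q * b) '' (ℓ : Set ℍ[ℝ]) := by
  obtain ⟨u, w, hu, hw, hwre, rfl⟩ := exists_span_eq_pair_mul ℓ hℓ
  obtain ⟨p, z, hp, hz, hzre, rfl⟩ := exists_span_eq_pair_mul m hm
  obtain ⟨c, hc, hcw⟩ := exists_norm_eq_one_mul_eq_or_neg hw hwre hz hzre
  refine ⟨c, star u * star c * p, hc, by simp only [norm_mul, norm_star, hu, hc, hp, one_mul], ?_⟩
  have hu_image : c * u * (star u * star c * p) = p := by
    rw [show c * u * (star u * star c * p) = c * (u * star u) * star c * p by noncomm_ring,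
      self_mul_star_eq_one hu, mul_one, self_mul_star_eq_one hc, one_mul]
  have hwu_image : c * (w * u) * (star u * star c * p) = c * w * star c * p := by
    rw [show c * (w * u) * (star u * star c * p) = c * w * (u * star u) * star c * p by
      noncomm_ring, self_mul_star_eq_one hu, mul_one]
  rw [Submodule.image_mul_mul_span_pair, hu_image, hwu_image]
  rcases hcw with h | h
  · rw [h, mul_assoc z, self_mul_star_eq_one hc, mul_one]
  · rw [h, neg_mul, neg_mul, mul_assoc z, self_mul_star_eq_one hc, mul_one,
      Submodule.span_pair_neg_right]
end

section
/- For every line ℓ (2-dimensional real subspace of ℍ), the left Clifford parallel class of ℓ, i.e., the family of lines {a • ℓ : a a unit quaternion} where a • ℓ = {a * q : q ∈ ℓ}, is a spread: every nonzero quaternion x lies in a • ℓ for some unit quaternion a, and any two members of this family that both contain x are equal as subspaces. -/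
open Quaternion

lemma coe_eq_smul_one' (r : ℝ) : (r : ℍ[ℝ]) = r • (1 : ℍ[ℝ]) := by
  rw [← Algebra.algebraMap_eq_smul_one]; rfl

lemma sq_of_re_zero (w : ℍ[ℝ]) (h : w.re = 0) : w * w = ((-(normSq w) : ℝ) : ℍ[ℝ]) := by
  ext <;> simp [normSq_def', h, pow_two] <;> ring

lemma two_dim_mul_closed (m : Submodule ℝ ℍ[ℝ]) (hm : Module.finrank ℝ m = 2)
    (h1 : (1 : ℍ[ℝ]) ∈ m) : ∀ y ∈ m, ∀ z ∈ m, y * z ∈ m := by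
  have hlt : Submodule.span ℝ {(1 : ℍ[ℝ])} < m := by
    rw [lt_iff_le_and_ne]
    refine ⟨by rwa [Submodule.span_singleton_le_iff_mem], ?_⟩
    intro h
    have := finrank_span_singleton (K := ℝ) (one_ne_zero : (1:ℍ[ℝ]) ≠ 0)
    rw [h, hm] at this
    norm_num at this
  obtain ⟨w0, hw0m, hw0⟩ := SetLike.exists_of_lt hlt
  obtain ⟨w, hwdef⟩ : ∃ w : ℍ[ℝ], w = w0 - (w0.re : ℍ[ℝ]) := ⟨_, rfl⟩
  have hwm : w ∈ m := by
    rw [hwdef]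
    exact Submodule.sub_mem _ hw0m (by rw [coe_eq_smul_one']; exact Submodule.smul_mem _ _ h1)
  have hwre : w.re = 0 := by simp [hwdef]
  have hwne : w ≠ 0 := by
    intro h
    apply hw0
    have hw0eq : w0 = (w0.re : ℍ[ℝ]) := by rw [hwdef] at h; rwa [sub_eq_zero] at h
    rw [hw0eq, coe_eq_smul_one']
    exact Submodule.smul_mem _ _ (Submodule.mem_span_singleton_self _)
  clear hwdef hw0 hw0m
  have hind : LinearIndependent ℝ ![(1 : ℍ[ℝ]), w] := by
    rw [LinearIndependent.pair_iff]
    intro s t hst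
    have hre : s = 0 := by
      have := congrArg QuaternionAlgebra.re hst
      simpa [hwre] using this
    subst hre
    simp at hst
    rcases hst with h | h
    · exact ⟨rfl, h⟩
    · exact absurd h hwne
  have hspan : Submodule.span ℝ {(1 : ℍ[ℝ]), w} = m := by
    apply Submodule.eq_of_le_of_finrank_le
    · rw [Submodule.span_le]
      intro x hx
      rcases hx with h | h
      · simpa [h] using h1
      · simp at h; simpa [h] using hwm
    · rw [hm]
      have hc := finrank_span_eq_card hind
      have hr : Set.range ![(1:ℍ[ℝ]), w] = {(1:ℍ[ℝ]), w} := by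
        ext x
        simp [Matrix.range_cons, Matrix.range_empty, Set.mem_insert_iff]; tauto
      rw [hr] at hc
      simp [hc]
  intro y hy z hz
  rw [← hspan] at hy hz ⊢
  rw [Submodule.mem_span_pair] at hy hz ⊢
  obtain ⟨a, b, rfl⟩ := hy
  obtain ⟨c, d, rfl⟩ := hz
  refine ⟨a * c + b * d * (-(normSq w)), a * d + b * c, ?_⟩
  have h2 : w * w = (-(normSq w)) • (1 : ℍ[ℝ]) := by
    rw [sq_of_re_zero w hwre, coe_eq_smul_one']
  have expand : (a • (1:ℍ[ℝ]) + b • w) * (c • (1:ℍ[ℝ]) + d • w)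
      = (a*c) • (1:ℍ[ℝ]) + (a*d) • w + (b*c) • w + (b*d) • (w*w) := by
    simp [add_mul, mul_add, smul_mul_assoc, mul_smul_comm, smul_smul]
    module
  rw [expand, h2]
  module

lemma left_mul_preserves (ℓ : Submodule ℝ ℍ[ℝ]) (hℓ : Module.finrank ℝ ℓ = 2)
    (p : ℍ[ℝ]) (hp : p ∈ ℓ) (hp0 : p ≠ 0) (c : ℍ[ℝ]) (hc : c * p ∈ ℓ) :
    ∀ r ∈ ℓ, c * r ∈ ℓ := by
  have hpinv : p⁻¹ ≠ 0 := inv_ne_zero hp0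
  set f : ℍ[ℝ] →ₗ[ℝ] ℍ[ℝ] := LinearMap.mulLeft ℝ p⁻¹ with hf
  have hinj : Function.Injective f := fun x y h => by
    simpa [hf, LinearMap.mulLeft_apply] using mul_left_cancel₀ hpinv h
  set m : Submodule ℝ ℍ[ℝ] := ℓ.map f with hmdef
  have hm2 : Module.finrank ℝ m = 2 := by
    rw [← (Submodule.equivMapOfInjective f hinj ℓ).finrank_eq]
    exact hℓ
  have h1m : (1 : ℍ[ℝ]) ∈ m := ⟨p, hp, by simp [hf, inv_mul_cancel₀ hp0]⟩
  have hz0 : p⁻¹ * (c * p) ∈ m := ⟨c * p, hc, rfl⟩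
  intro r hr
  have hz : p⁻¹ * r ∈ m := ⟨r, hr, rfl⟩
  have hmul := two_dim_mul_closed m hm2 h1m _ hz0 _ hz
  obtain ⟨s, hs, hseq⟩ := hmul
  have : p⁻¹ * (c * p) * (p⁻¹ * r) = p⁻¹ * (c * r) := by
    rw [mul_assoc p⁻¹ (c*p), mul_assoc c, ← mul_assoc p, mul_inv_cancel₀ hp0, one_mul]
  have : s = c * r := hinj (by simpa [hf, this] using hseq)
  rwa [← this]

/-- For every line `ℓ`, the left Clifford parallel class `{a • ℓ : ‖a‖ = 1}` is a spread:
every nonzero quaternion lies in `a • ℓ` for some unit quaternion `a`, and any two members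
containing a common nonzero point coincide. -/
theorem leftCliffordClass_isSpread (ℓ : Submodule ℝ ℍ[ℝ]) (hℓ : Module.finrank ℝ ℓ = 2) :
    ∀ x : ℍ[ℝ], x ≠ 0 →
      (∃ a : ℍ[ℝ], ‖a‖ = 1 ∧ x ∈ (fun q => a * q) '' (ℓ : Set ℍ[ℝ])) ∧
      (∀ a b : ℍ[ℝ], ‖a‖ = 1 → ‖b‖ = 1 →
        x ∈ (fun q => a * q) '' (ℓ : Set ℍ[ℝ]) → x ∈ (fun q => b * q) '' (ℓ : Set ℍ[ℝ]) →
        (fun q => a * q) '' (ℓ : Set ℍ[ℝ]) = (fun q => b * q) '' (ℓ : Set ℍ[ℝ])) := by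
  intro x hx
  -- get a nonzero point of ℓ
  have hbot : ℓ ≠ ⊥ := by
    intro h
    rw [h] at hℓ
    simp [finrank_bot] at hℓ
  obtain ⟨p, hp, hp0⟩ := Submodule.exists_mem_ne_zero_of_ne_bot hbot
  constructor
  · -- existence
    have hxp : x * p⁻¹ ≠ 0 := mul_ne_zero hx (inv_ne_zero hp0)
    set t : ℝ := ‖x * p⁻¹‖ with ht
    have ht0 : t ≠ 0 := norm_ne_zero_iff.mpr hxp
    refine ⟨t⁻¹ • (x * p⁻¹), ?_, t • p, Submodule.smul_mem _ _ hp, ?_⟩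
    · rw [norm_smul]
      have hnp : ‖p‖ ≠ 0 := norm_ne_zero_iff.mpr hp0
      have hnx : ‖x‖ ≠ 0 := norm_ne_zero_iff.mpr hx
      simp [ht]
      field_simp
    · show t⁻¹ • (x * p⁻¹) * (t • p) = x
      rw [smul_mul_assoc, mul_smul_comm, smul_smul, inv_mul_cancel₀ ht0, one_smul,
        mul_assoc, inv_mul_cancel₀ hp0, mul_one]
  · -- uniqueness
    intro a b ha hb hxa hxb
    obtain ⟨u, hu, hau⟩ := hxa
    obtain ⟨v, hv, hbv⟩ := hxb
    simp only at hau hbv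
    have ha0 : a ≠ 0 := by intro h; rw [h] at ha; simp at ha
    have hb0 : b ≠ 0 := by intro h; rw [h] at hb; simp at hb
    have hu0 : u ≠ 0 := by rintro rfl; rw [mul_zero] at hau; exact hx hau.symm
    have hv0 : v ≠ 0 := by rintro rfl; rw [mul_zero] at hbv; exact hx hbv.symm
    have hba : b⁻¹ * a * u ∈ ℓ := by
      rw [mul_assoc, hau, ← hbv, ← mul_assoc, inv_mul_cancel₀ hb0, one_mul]
      exact hv
    have hab : a⁻¹ * b * v ∈ ℓ := by
      rw [mul_assoc, hbv, ← hau, ← mul_assoc, inv_mul_cancel₀ ha0, one_mul]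
      exact hu
    have hba' := left_mul_preserves ℓ hℓ u hu hu0 _ hba
    have hab' := left_mul_preserves ℓ hℓ v hv hv0 _ hab
    ext y
    simp only [Set.mem_image, SetLike.mem_coe]
    constructor
    · rintro ⟨r, hr, rfl⟩
      exact ⟨b⁻¹ * a * r, hba' r hr, by rw [← mul_assoc, ← mul_assoc, mul_inv_cancel₀ hb0, one_mul]⟩
    · rintro ⟨r, hr, rfl⟩
      exact ⟨a⁻¹ * b * r, hab' r hr, by rw [← mul_assoc, ← mul_assoc, mul_inv_cancel₀ ha0, one_mul]⟩
end

section
/- Let Π be a parallelism on PG(3,ℝ), i.e., a partition of the set of all lines (2-dimensional real subspaces of ℍ) into spreads. If every class of Π is invariant under all left multiplications by unit quaternions (that is, for every class 𝒞 ∈ Π, every unit quaternion a, and every ℓ ∈ 𝒞, the line a • ℓ = {a * q : q ∈ ℓ} again belongs to 𝒞), then Π is the left Clifford parallelism: every class of Π is exactly the orbit {a • ℓ : a a unit quaternion} of any of its members ℓ. -/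
open Quaternion

/-- A spread of PG(3,ℝ): a set of lines (2-dimensional real subspaces of ℍ) such that
every nonzero vector of ℍ lies on exactly one of them. -/
def IsSpread (S : Set (Submodule ℝ ℍ[ℝ])) : Prop :=
  (∀ ℓ ∈ S, Module.finrank ℝ ℓ = 2) ∧
  ∀ x : ℍ[ℝ], x ≠ 0 → ∃! ℓ : Submodule ℝ ℍ[ℝ], ℓ ∈ S ∧ x ∈ ℓ

/-- A parallelism on PG(3,ℝ): a partition of the set of all lines into spreads,
i.e. a family of spreads such that every line belongs to exactly one of them. -/
def IsParallelism (P : Set (Set (Submodule ℝ ℍ[ℝ]))) : Prop :=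
  (∀ 𝒞 ∈ P, IsSpread 𝒞) ∧
  ∀ ℓ : Submodule ℝ ℍ[ℝ], Module.finrank ℝ ℓ = 2 →
    ∃! 𝒞 : Set (Submodule ℝ ℍ[ℝ]), 𝒞 ∈ P ∧ ℓ ∈ 𝒞

/-- If every class of a parallelism `Π` is invariant under all left multiplications by unit
quaternions, then `Π` is the left Clifford parallelism: every class is exactly the orbit
`{a • ℓ : ‖a‖ = 1}` of any of its members `ℓ`. -/
theorem parallelism_invariant_eq_clifford (P : Set (Set (Submodule ℝ ℍ[ℝ])))
    (hP : IsParallelism P)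
    (hinv : ∀ 𝒞 ∈ P, ∀ a : ℍ[ℝ], ‖a‖ = 1 → ∀ ℓ ∈ 𝒞,
      Submodule.map (LinearMap.mulLeft ℝ a) ℓ ∈ 𝒞) :
    ∀ 𝒞 ∈ P, ∀ ℓ ∈ 𝒞,
      𝒞 = {m : Submodule ℝ ℍ[ℝ] |
        ∃ a : ℍ[ℝ], ‖a‖ = 1 ∧ m = Submodule.map (LinearMap.mulLeft ℝ a) ℓ} := by

  obtain ⟨hspread, huniq⟩ := hP
  intro 𝒞 h𝒞 ℓ hℓ
  ext m
  constructor
  · intro hm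
    obtain ⟨hdim, hx⟩ := hspread 𝒞 h𝒞
    have hmne : m ≠ ⊥ := by
      intro h; have := hdim m hm; rw [h] at this; simp at this
    obtain ⟨x, hxm, hx0⟩ := Submodule.exists_mem_ne_zero_of_ne_bot hmne
    have hℓne : ℓ ≠ ⊥ := by
      intro h; have := hdim ℓ hℓ; rw [h] at this; simp at this
    obtain ⟨y, hyℓ, hy0⟩ := Submodule.exists_mem_ne_zero_of_ne_bot hℓne
    set c : ℍ[ℝ] := x * y⁻¹ with hc
    have hc0 : c ≠ 0 := mul_ne_zero hx0 (inv_ne_zero hy0)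
    have hnc : ‖c‖ ≠ 0 := norm_ne_zero_iff.mpr hc0
    set a : ℍ[ℝ] := ‖c‖⁻¹ • c with ha
    have hna : ‖a‖ = 1 := by
      rw [ha, norm_smul, norm_inv, norm_norm, inv_mul_cancel₀ hnc]
    have hmem : Submodule.map (LinearMap.mulLeft ℝ a) ℓ ∈ 𝒞 := hinv 𝒞 h𝒞 a hna ℓ hℓ
    have hxmem : x ∈ Submodule.map (LinearMap.mulLeft ℝ a) ℓ := by
      refine ⟨‖c‖ • y, Submodule.smul_mem _ _ hyℓ, ?_⟩
      simp only [LinearMap.mulLeft_apply, ha, smul_mul_assoc, mul_smul_comm, smul_smul,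
        hc]
      rw [mul_inv_cancel₀ hnc, one_smul, mul_assoc, inv_mul_cancel₀ hy0, mul_one]
    obtain ⟨u, hu, hun⟩ := hx x hx0
    have e1 := hun m ⟨hm, hxm⟩
    have e2 := hun _ ⟨hmem, hxmem⟩
    exact ⟨a, hna, e1.trans e2.symm⟩
  · rintro ⟨a, hna, rfl⟩
    exact hinv 𝒞 h𝒞 a hna ℓ hℓ
end

section
/- For every unit quaternion b, right multiplication by b maps each left Clifford parallel class onto a left Clifford parallel class: for every line ℓ, the image under m ↦ m * b = {q * b : q ∈ m} of the class {a • ℓ : a a unit quaternion} equals the class {a • (ℓ * b) : a a unit quaternion}. Moreover, the right multiplications act transitively on the set of left Clifford parallel classes: for any two lines ℓ and m there is a unit quaternion b such that the left Clifford parallel class of ℓ * b equals the left Clifford parallel class of m. -/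
open Quaternion

/-- The left Clifford parallel class of a line `ℓ`: the set of images of `ℓ` under left
multiplications by unit quaternions. -/
def leftCliffordClass (ℓ : Submodule ℝ ℍ[ℝ]) : Set (Submodule ℝ ℍ[ℝ]) :=
  {m | ∃ a : ℍ[ℝ], ‖a‖ = 1 ∧ m = Submodule.map (LinearMap.mulLeft ℝ a) ℓ}

/-!
Left and right multiplications commute. For transitivity, translate `ℓ` on the right and `m` on the
left by inverses of nonzero elements they contain; this does not change the class of `m` (unit and
nonzero multipliers give the same class), and both lines now pass through `1`. Such a line is
`span {1, w}` with `w * w = -1`, and `q = 1 - z * w` satisfies `q * w = z * q`, so conjugation by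
`q`, i.e. left multiplication by `q` followed by right multiplication by `q⁻¹`, carries
`span {1, w}` to `span {1, z}` (if `q = 0`, use `-z` instead of `z`).
-/

open LinearMap Module

namespace Submodule

section Algebra

variable {R A : Type*} [CommSemiring R] [Semiring A] [Algebra R A]

theorem map_mulRight_map_mulLeft (p : Submodule R A) (a b : A) :
    (p.map (mulLeft R a)).map (mulRight R b) = (p.map (mulRight R b)).map (mulLeft R a) := by
  rw [← map_comp, ← map_comp, ← Module.End.mul_eq_comp, ← Module.End.mul_eq_comp,
    (commute_mulLeft_right a b).eq]

theorem map_mulLeft_map_mulLeft (p : Submodule R A) (a c : A) :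
    (p.map (mulLeft R a)).map (mulLeft R c) = p.map (mulLeft R (c * a)) := by
  rw [← map_comp, mulLeft_mul]

end Algebra

section DivisionRing

variable {K A : Type*} [Field K] [DivisionRing A] [Algebra K A]

theorem map_mulLeft_smul (p : Submodule K A) {r : K} (hr : r ≠ 0) (a : A) :
    p.map (mulLeft K (r • a)) = p.map (mulLeft K a) := by
  rw [show mulLeft K (r • a) = r • mulLeft K a by ext; simp]
  exact p.map_smul _ r hr

theorem map_mulRight_smul (p : Submodule K A) {r : K} (hr : r ≠ 0) (a : A) :
    p.map (mulRight K (r • a)) = p.map (mulRight K a) := by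
  rw [show mulRight K (r • a) = r • mulRight K a by ext; simp]
  exact p.map_smul _ r hr

theorem finrank_map_mulLeft (p : Submodule K A) {a : A} (ha : a ≠ 0) :
    finrank K (p.map (mulLeft K a)) = finrank K p :=
  (p.equivMapOfInjective _ (mul_right_injective₀ ha)).finrank_eq.symm

theorem finrank_map_mulRight (p : Submodule K A) {a : A} (ha : a ≠ 0) :
    finrank K (p.map (mulRight K a)) = finrank K p :=
  (p.equivMapOfInjective _ (mul_left_injective₀ ha)).finrank_eq.symm

theorem one_mem_map_mulLeft_inv {p : Submodule K A} {a : A} (hap : a ∈ p) (ha : a ≠ 0) :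
    1 ∈ p.map (mulLeft K a⁻¹) :=
  ⟨a, hap, inv_mul_cancel₀ ha⟩

theorem one_mem_map_mulRight_inv {p : Submodule K A} {a : A} (hap : a ∈ p) (ha : a ≠ 0) :
    1 ∈ p.map (mulRight K a⁻¹) :=
  ⟨a, hap, mul_inv_cancel₀ ha⟩

end DivisionRing

end Submodule

open Submodule

theorem semiconjBy_one_sub_mul {A : Type*} [Ring A] {w z : A} (hw : w * w = -1)
    (hz : z * z = -1) : SemiconjBy (1 - z * w) w z := by
  unfold SemiconjBy
  rw [sub_mul, mul_sub, mul_assoc, hw, ← mul_assoc, hz]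
  noncomm_ring

namespace Quaternion

variable {ℓ : Submodule ℝ ℍ[ℝ]}

theorem exists_mem_mul_self_eq_neg_one (hℓ : finrank ℝ ℓ = 2) (h1 : (1 : ℍ[ℝ]) ∈ ℓ) :
    ∃ w ∈ ℓ, w * w = -1 := by
  obtain ⟨p, hpℓ, hp⟩ : ∃ p ∈ ℓ, p ∉ ℝ ∙ (1 : ℍ[ℝ]) := by
    by_contra! h
    have := finrank_mono (show ℓ ≤ ℝ ∙ (1 : ℍ[ℝ]) from h)
    rw [hℓ, finrank_span_singleton one_ne_zero] at this
    omega
  have him_eq : p.im = p - p.re • 1 := by ext <;> simp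
  have him_mem : p.im ∈ ℓ := him_eq ▸ ℓ.sub_mem hpℓ (ℓ.smul_mem _ h1)
  have him : p.im ≠ 0 := fun h ↦
    hp (mem_span_singleton.mpr ⟨p.re, (sub_eq_zero.mp (him_eq ▸ h)).symm⟩)
  refine ⟨‖p.im‖⁻¹ • p.im, ℓ.smul_mem _ him_mem, ?_⟩
  have hnorm : ‖‖p.im‖⁻¹ • p.im‖ = 1 := norm_smul_inv_norm him
  rw [← sq, sq_eq_neg_normSq.mpr (by simp), normSq_eq_norm_mul_self, hnorm]
  norm_num

theorem span_one_pair_eq (hℓ : finrank ℝ ℓ = 2) (h1 : (1 : ℍ[ℝ]) ∈ ℓ) {w : ℍ[ℝ]} (hwℓ : w ∈ ℓ)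
    (hw : w * w = -1) : span ℝ {1, w} = ℓ := by
  have hli : LinearIndependent ℝ ![(1 : ℍ[ℝ]), w] := by
    refine (LinearIndependent.pair_iff' one_ne_zero).mpr fun r hr ↦ ?_
    have := congrArg QuaternionAlgebra.re (hr ▸ hw)
    simp at this
    nlinarith
  refine eq_of_le_of_finrank_eq (span_le.mpr (Set.insert_subset_iff.mpr ⟨h1, by simpa⟩)) ?_
  rw [hℓ, ← Matrix.range_cons_cons_empty, finrank_span_eq_card hli, Fintype.card_fin]

theorem exists_conj_eq_of_one_mem {A B : Submodule ℝ ℍ[ℝ]} (hA : finrank ℝ A = 2)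
    (hB : finrank ℝ B = 2) (h1A : (1 : ℍ[ℝ]) ∈ A) (h1B : (1 : ℍ[ℝ]) ∈ B) :
    ∃ q ≠ 0, (A.map (mulLeft ℝ q)).map (mulRight ℝ q⁻¹) = B := by
  obtain ⟨w, hwA, hw⟩ := exists_mem_mul_self_eq_neg_one hA h1A
  obtain ⟨z₀, hz₀B, hz₀⟩ := exists_mem_mul_self_eq_neg_one hB h1B
  obtain ⟨z, hzB, hz, hq⟩ : ∃ z ∈ B, z * z = -1 ∧ 1 - z * w ≠ 0 := by
    by_cases h : 1 - z₀ * w = 0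
    · refine ⟨-z₀, B.neg_mem hz₀B, by rw [neg_mul_neg, hz₀], ?_⟩
      rw [neg_mul, sub_neg_eq_add, ← sub_eq_zero.mp h]
      exact fun h ↦ by simpa using congrArg QuaternionAlgebra.re h
    · exact ⟨z₀, hz₀B, hz₀, h⟩
  refine ⟨1 - z * w, hq, ?_⟩
  have hconj : (1 - z * w) * w * (1 - z * w)⁻¹ = z := by
    rw [(semiconjBy_one_sub_mul hw hz).eq, mul_inv_cancel_right₀ hq]
  rw [← span_one_pair_eq hA h1A hwA hw, ← span_one_pair_eq hB h1B hzB hz, Submodule.map_span,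
    Submodule.map_span, Set.image_pair, Set.image_pair]
  simp [hconj, hq]

end Quaternion

theorem leftCliffordClass_eq_setOf_ne_zero (ℓ : Submodule ℝ ℍ[ℝ]) :
    leftCliffordClass ℓ = {m | ∃ a ≠ 0, m = ℓ.map (mulLeft ℝ a)} := by
  ext m
  constructor
  · rintro ⟨a, ha, rfl⟩
    exact ⟨a, norm_ne_zero_iff.mp (ha ▸ one_ne_zero), rfl⟩
  · rintro ⟨a, ha, rfl⟩
    exact ⟨‖a‖⁻¹ • a, norm_smul_inv_norm ha,
      (ℓ.map_mulLeft_smul (inv_ne_zero (norm_ne_zero_iff.mpr ha)) a).symm⟩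

theorem leftCliffordClass_map_mulLeft {ℓ : Submodule ℝ ℍ[ℝ]} {a : ℍ[ℝ]} (ha : a ≠ 0) :
    leftCliffordClass (ℓ.map (mulLeft ℝ a)) = leftCliffordClass ℓ := by
  simp only [leftCliffordClass_eq_setOf_ne_zero, map_mulLeft_map_mulLeft]
  ext m
  constructor
  · rintro ⟨c, hc, rfl⟩
    exact ⟨c * a, mul_ne_zero hc ha, rfl⟩
  · rintro ⟨c, hc, rfl⟩
    exact ⟨c * a⁻¹, mul_ne_zero hc (inv_ne_zero ha), by rw [inv_mul_cancel_right₀ ha]⟩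

theorem image_map_mulRight_leftCliffordClass (b : ℍ[ℝ]) (ℓ : Submodule ℝ ℍ[ℝ]) :
    map (mulRight ℝ b) '' leftCliffordClass ℓ = leftCliffordClass (ℓ.map (mulRight ℝ b)) := by
  ext m
  constructor
  · rintro ⟨_, ⟨a, ha, rfl⟩, rfl⟩
    exact ⟨a, ha, ℓ.map_mulRight_map_mulLeft a b⟩
  · rintro ⟨a, ha, rfl⟩
    exact ⟨_, ⟨a, ha, rfl⟩, ℓ.map_mulRight_map_mulLeft a b⟩

theorem exists_norm_eq_one_leftCliffordClass_map_mulRight_eq {ℓ m : Submodule ℝ ℍ[ℝ]}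
    (hℓ : finrank ℝ ℓ = 2)
    (hm : finrank ℝ m = 2) :
    ∃ b : ℍ[ℝ], ‖b‖ = 1 ∧ leftCliffordClass (ℓ.map (mulRight ℝ b)) = leftCliffordClass m := by
  obtain ⟨u, huℓ, hu⟩ := exists_mem_ne_zero_of_ne_bot (by rintro rfl; simp at hℓ : ℓ ≠ ⊥)
  obtain ⟨v, hvm, hv⟩ := exists_mem_ne_zero_of_ne_bot (by rintro rfl; simp at hm : m ≠ ⊥)
  obtain ⟨q, hq, hconj⟩ := Quaternion.exists_conj_eq_of_one_mem
    (by rwa [finrank_map_mulRight _ (inv_ne_zero hu)])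
    (by rwa [finrank_map_mulLeft _ (inv_ne_zero hv)])
    (one_mem_map_mulRight_inv huℓ hu) (one_mem_map_mulLeft_inv hvm hv)
  set b := u⁻¹ * q⁻¹
  have hb : b ≠ 0 := mul_ne_zero (inv_ne_zero hu) (inv_ne_zero hq)
  have hm : m = (ℓ.map (mulRight ℝ b)).map (mulLeft ℝ (v * q)) := by
    refine map_injective_of_injective (f := mulLeft ℝ v⁻¹)
      (mul_right_injective₀ (inv_ne_zero hv)) ?_
    rw [← hconj]
    simp only [← map_comp]
    congr 1
    refine LinearMap.ext fun x ↦ ?_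
    simp [b, mul_assoc, inv_mul_cancel_left₀ hv]
  refine ⟨‖b‖⁻¹ • b, norm_smul_inv_norm hb, ?_⟩
  rw [map_mulRight_smul _ (inv_ne_zero (norm_ne_zero_iff.mpr hb)), hm,
    leftCliffordClass_map_mulLeft (mul_ne_zero hv hq)]

/-- Right multiplication by a unit quaternion `b` maps each left Clifford parallel class
onto a left Clifford parallel class, and the right multiplications act transitively on the
set of left Clifford parallel classes. -/
theorem rightMul_on_leftCliffordClasses :
    (∀ b : ℍ[ℝ], ‖b‖ = 1 → ∀ ℓ : Submodule ℝ ℍ[ℝ], Module.finrank ℝ ℓ = 2 →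
      Submodule.map (LinearMap.mulRight ℝ b) '' leftCliffordClass ℓ =
        leftCliffordClass (Submodule.map (LinearMap.mulRight ℝ b) ℓ)) ∧
    (∀ ℓ m : Submodule ℝ ℍ[ℝ], Module.finrank ℝ ℓ = 2 → Module.finrank ℝ m = 2 →
      ∃ b : ℍ[ℝ], ‖b‖ = 1 ∧
        leftCliffordClass (Submodule.map (LinearMap.mulRight ℝ b) ℓ) =
          leftCliffordClass m) :=
  ⟨fun b _ ℓ _ ↦ image_map_mulRight_leftCliffordClass b ℓ,
    fun _ _ hℓ hm ↦ exists_norm_eq_one_leftCliffordClass_map_mulRight_eq hℓ hm⟩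
end

section
/- A line ℓ (2-dimensional real subspace of ℍ) is invariant under left multiplication by every unit complex number (i.e., ι(a) * ℓ = ℓ for all a ∈ ℂ with |a| = 1, where ι : ℂ → ℍ is the standard embedding) if and only if ℓ is a left complex line, i.e., ℓ = {ι(z) * p : z ∈ ℂ} for some nonzero p ∈ ℍ. -/
/-!
If `ℓ` is invariant under left multiplication by `i`, then for any `p ≠ 0` in `ℓ` it contains
`ℝ p + ℝ ip = {ι z * p}`. Since `ℍ` has no zero divisors, `z ↦ ι z * p` is an injective
`ℝ`-linear map, so this complex line is 2-dimensional and hence equals `ℓ`. Conversely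
`ι a * (ι z * p) = ι (a z) * p`, and `z ↦ a z` is a bijection of `ℂ` for `a ≠ 0`.
-/

open Quaternion

def ι (z : ℂ) : ℍ[ℝ] := ⟨z.re, z.im, 0, 0⟩

open Module

variable {A : Type*} [Ring A] [Algebra ℝ A] (φ : ℂ →ₐ[ℝ] A)

noncomputable def complexLine (p : A) : Submodule ℝ A :=
  LinearMap.range (LinearMap.mulRight ℝ p ∘ₗ φ.toLinearMap)

variable {φ}

theorem mem_complexLine {p v : A} : v ∈ complexLine φ p ↔ ∃ z : ℂ, φ z * p = v := Iff.rfl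

theorem coe_complexLine (p : A) : (complexLine φ p : Set A) = {v | ∃ z : ℂ, v = φ z * p} :=
  Set.ext fun _ ↦ exists_congr fun _ ↦ eq_comm

theorem map_mul_eq_re_smul_add_im_smul (z : ℂ) (p : A) :
    φ z * p = z.re • p + z.im • (φ Complex.I * p) := by
  have hz : z = z.re • (1 : ℂ) + z.im • Complex.I := by simp
  calc φ z * p = φ (z.re • (1 : ℂ) + z.im • Complex.I) * p := by rw [← hz]
    _ = z.re • p + z.im • (φ Complex.I * p) := by
      rw [map_add, map_smul, map_smul, map_one, add_mul, smul_mul_assoc, smul_mul_assoc, one_mul]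

theorem complexLine_le {p : A} {ℓ : Submodule ℝ A} (hp : p ∈ ℓ) (hIp : φ Complex.I * p ∈ ℓ) :
    complexLine φ p ≤ ℓ := by
  intro v hv
  obtain ⟨z, rfl⟩ := mem_complexLine.mp hv
  rw [map_mul_eq_re_smul_add_im_smul]
  exact ℓ.add_mem (ℓ.smul_mem _ hp) (ℓ.smul_mem _ hIp)

theorem finrank_complexLine [NoZeroDivisors A] {p : A} (hp : p ≠ 0) :
    finrank ℝ (complexLine φ p) = 2 := by
  have : Nontrivial A := nontrivial_of_ne p 0 hp
  rw [complexLine, LinearMap.finrank_range_of_inj, Complex.finrank_real_complex]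
  exact fun z w h ↦ φ.injective (mul_right_cancel₀ hp h)

theorem image_mul_left_complexLine {a : ℂ} (ha : a ≠ 0) (p : A) :
    (φ a * ·) '' (complexLine φ p : Set A) = complexLine φ p := by
  ext v
  simp only [Set.mem_image, SetLike.mem_coe, mem_complexLine]
  constructor
  · rintro ⟨-, ⟨z, rfl⟩, rfl⟩
    exact ⟨a * z, by rw [map_mul, mul_assoc]⟩
  · rintro ⟨z, rfl⟩
    refine ⟨φ (a⁻¹ * z) * p, ⟨a⁻¹ * z, rfl⟩, ?_⟩
    rw [← mul_assoc, ← map_mul, mul_inv_cancel_left₀ ha]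

theorem invariant_iff_eq_complexLine [NoZeroDivisors A] (ℓ : Submodule ℝ A)
    (hℓ : finrank ℝ ℓ = 2) :
    (∀ a : ℂ, ‖a‖ = 1 → (φ a * ·) '' (ℓ : Set A) = ℓ) ↔ ∃ p : A, p ≠ 0 ∧ ℓ = complexLine φ p := by
  refine ⟨fun h ↦ ?_, ?_⟩
  · have : FiniteDimensional ℝ ℓ := finite_of_finrank_eq_succ hℓ
    obtain ⟨p, hpℓ, hp⟩ :=
      Submodule.exists_mem_ne_zero_of_ne_bot (Submodule.one_le_finrank_iff.mp (hℓ ▸ one_le_two))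
    have hIp : φ Complex.I * p ∈ ℓ := by
      rw [← SetLike.mem_coe, ← h Complex.I Complex.norm_I]
      exact ⟨p, hpℓ, rfl⟩
    refine ⟨p, hp, (Submodule.eq_of_le_of_finrank_eq (complexLine_le hpℓ hIp) ?_).symm⟩
    rw [finrank_complexLine hp, hℓ]
  · rintro ⟨p, -, rfl⟩ a ha
    exact image_mul_left_complexLine (norm_ne_zero_iff.mp (ha ▸ one_ne_zero)) p

/-- A line `ℓ` of PG(3,ℝ) is invariant under left multiplication by every unit complex
number if and only if `ℓ` is a left complex line `{ι z * p : z ∈ ℂ}` for some `p ≠ 0`. -/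
theorem invariant_iff_complex_line (ℓ : Submodule ℝ ℍ[ℝ]) (hℓ : Module.finrank ℝ ℓ = 2) :
    (∀ a : ℂ, ‖a‖ = 1 → (fun q => ι a * q) '' (ℓ : Set ℍ[ℝ]) = (ℓ : Set ℍ[ℝ])) ↔
      ∃ p : ℍ[ℝ], p ≠ 0 ∧ (ℓ : Set ℍ[ℝ]) = {v : ℍ[ℝ] | ∃ z : ℂ, v = ι z * p} := by
  have hι : ι = Quaternion.ofComplex := rfl
  simp_rw [hι, ← coe_complexLine, SetLike.coe_set_eq]
  exact invariant_iff_eq_complexLine ℓ hℓ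
end
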